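/- Local complementation preserves the bipartition structure up to neighborhoods: if G is bipartite with parts L and R, a ∈ R, b ∈ L, and (a,b) is an edge of G, then the pivot G ∧ ab := ((G ⋆ a) ⋆ b) ⋆ a is bipartite with respect to the partition L Δ {a,b}, R Δ {a,b}. -/

import Mathlib

/-!
Let `x, y ∉ {a, b}` be non-neighbours of `b`. Then `G ⋆ a` toggles `xy` iff `x, y ∈ N(a)`, and
afterwards `N(b)` meets `{x, y}` exactly in `N(a)`; so `⋆ b` toggles `xy` back and leaves `a` with
no neighbour among `x, y`, and the final `⋆ a` changes nothing. Hence the pivot agrees with `G` on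
non-neighbours of `b`, and symmetrically on non-neighbours of `a`; a similar computation shows that
`a` acquires no neighbour outside `N(b)`, nor `b` outside `N(a)`. In the bipartite graph `L \ {b}`
avoids `N(b)` and `R \ {a}` avoids `N(a)`, so `L ∆ {a, b} = {a} ∪ L \ {b}` and
`R ∆ {a, b} = {b} ∪ R \ {a}` stay independent.
-/

variable {V : Type*}

/-- Local complementation at `v`: toggle edges within the neighborhood of `v`. -/
def localComp (G : SimpleGraph V) (v : V) : SimpleGraph V where
  Adj x y := x ≠ y ∧ Xor' (G.Adj x y) (G.Adj v x ∧ G.Adj v y)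
  symm := by
    constructor
    rintro x y ⟨hxy, h⟩
    refine ⟨hxy.symm, ?_⟩
    have := G.adj_comm x y
    unfold Xor' Xor at *
    tauto
  loopless := by constructor; rintro x ⟨h, -⟩; exact h rfl

/-- The pivot of `G` along the edge `ab`: `G ∧ ab = ((G ⋆ a) ⋆ b) ⋆ a`. -/
def pivot (G : SimpleGraph V) (a b : V) : SimpleGraph V :=
  localComp (localComp (localComp G a) b) a

theorem Set.symmDiff_pair_eq_insert_sdiff {α : Type*} {s : Set α} {a b : α} (ha : a ∉ s)
    (hb : b ∈ s) : symmDiff s {a, b} = insert a (s \ {b}) := by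
  ext x
  simp only [Set.mem_symmDiff, Set.mem_insert_iff, Set.mem_singleton_iff, Set.mem_sdiff]
  by_cases hxa : x = a <;> by_cases hxb : x = b <;> simp_all

theorem SimpleGraph.isIndepSet_iff_forall_not_adj {G : SimpleGraph V} {s : Set V} :
    G.IsIndepSet s ↔ ∀ x ∈ s, ∀ y ∈ s, ¬G.Adj x y :=
  ⟨fun hs _ hx _ hy hxy => hs hx hy hxy.ne hxy, fun hs x hx y hy _ => hs x hx y hy⟩

section Pivot

variable {G : SimpleGraph V} {s : Set V} {a b v x y : V}

theorem localComp_adj :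
    (localComp G v).Adj x y ↔ x ≠ y ∧ Xor (G.Adj x y) (G.Adj v x ∧ G.Adj v y) :=
  Iff.rfl

theorem pivot_adj_iff_of_not_adj_snd (hab : G.Adj a b) (hxa : x ≠ a) (hxb : x ≠ b)
    (hya : y ≠ a) (hyb : y ≠ b) (hbx : ¬G.Adj b x) (hby : ¬G.Adj b y) :
    (pivot G a b).Adj x y ↔ G.Adj x y := by
  simp only [pivot, localComp_adj, xor_def, ne_eq, hab, hab.symm, hab.ne', G.irrefl,
    not_false_eq_true, true_and, and_true, false_and, and_false, or_false, false_or, hbx, hby,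
    hxa.symm, hxb.symm, hya.symm, hyb.symm]
  have : G.Adj x y → x ≠ y := G.ne_of_adj
  tauto

theorem pivot_adj_iff_of_not_adj_fst (hab : G.Adj a b) (hxa : x ≠ a) (hxb : x ≠ b)
    (hya : y ≠ a) (hyb : y ≠ b) (hax : ¬G.Adj a x) (hay : ¬G.Adj a y) :
    (pivot G a b).Adj x y ↔ G.Adj x y := by
  simp only [pivot, localComp_adj, xor_def, ne_eq, hab, hab.symm, hab.ne', G.irrefl,
    not_false_eq_true, true_and, and_true, false_and, and_false, or_false, false_or, hax, hay,
    hxa.symm, hxb.symm, hya.symm, hyb.symm]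
  have : G.Adj x y → x ≠ y := G.ne_of_adj
  tauto

theorem not_pivot_adj_fst (hab : G.Adj a b) (hyb : y ≠ b) (hby : ¬G.Adj b y) :
    ¬(pivot G a b).Adj a y := by
  simp only [pivot, localComp_adj, xor_def, ne_eq, hab, hab.symm, hab.ne', G.irrefl,
    not_false_eq_true, true_and, and_true, false_and, and_false, or_false, false_or, hby, hyb.symm]
  tauto

theorem not_pivot_adj_snd (hab : G.Adj a b) (hya : y ≠ a) (hay : ¬G.Adj a y) :
    ¬(pivot G a b).Adj b y := by
  simp only [pivot, localComp_adj, xor_def, ne_eq, hab, hab.symm, hab.ne, hab.ne', G.irrefl,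
    not_false_eq_true, true_and, and_true, false_and, and_false, or_false, false_or, hay, hya.symm]
  tauto

theorem SimpleGraph.IsIndepSet.pivot_insert_sdiff_snd (hs : G.IsIndepSet s) (hab : G.Adj a b)
    (hb : b ∈ s) : (pivot G a b).IsIndepSet (insert a (s \ {b})) := by
  have ha : a ∉ s := fun ha => hs ha hb hab.ne hab
  have hmem : ∀ x ∈ s \ {b}, x ≠ a ∧ x ≠ b ∧ ¬G.Adj b x := fun x ⟨hx, hxb⟩ =>
    ⟨ne_of_mem_of_not_mem hx ha, hxb, hs hb hx (Ne.symm hxb)⟩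
  refine Set.pairwise_insert.2 ⟨fun x hx y hy hxy => ?_, fun y hy _ => ?_⟩
  · obtain ⟨hxa, hxb, hbx⟩ := hmem x hx
    obtain ⟨hya, hyb, hby⟩ := hmem y hy
    rw [pivot_adj_iff_of_not_adj_snd hab hxa hxb hya hyb hbx hby]
    exact hs hx.1 hy.1 hxy
  · obtain ⟨-, hyb, hby⟩ := hmem y hy
    have hay := not_pivot_adj_fst hab hyb hby
    exact ⟨hay, fun h => hay h.symm⟩

theorem SimpleGraph.IsIndepSet.pivot_insert_sdiff_fst (hs : G.IsIndepSet s) (hab : G.Adj a b)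
    (ha : a ∈ s) : (pivot G a b).IsIndepSet (insert b (s \ {a})) := by
  have hb : b ∉ s := fun hb => hs ha hb hab.ne hab
  have hmem : ∀ x ∈ s \ {a}, x ≠ a ∧ x ≠ b ∧ ¬G.Adj a x := fun x ⟨hx, hxa⟩ =>
    ⟨hxa, ne_of_mem_of_not_mem hx hb, hs ha hx (Ne.symm hxa)⟩
  refine Set.pairwise_insert.2 ⟨fun x hx y hy hxy => ?_, fun y hy _ => ?_⟩
  · obtain ⟨hxa, hxb, hax⟩ := hmem x hx
    obtain ⟨hya, hyb, hay⟩ := hmem y hy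
    rw [pivot_adj_iff_of_not_adj_fst hab hxa hxb hya hyb hax hay]
    exact hs hx.1 hy.1 hxy
  · obtain ⟨hya, -, hay⟩ := hmem y hy
    have hby := not_pivot_adj_snd hab hya hay
    exact ⟨hby, fun h => hby h.symm⟩

end Pivot

theorem pivot_bipartite_general (G : SimpleGraph V) (L R : Set V)
    (hL : ∀ x ∈ L, ∀ y ∈ L, ¬ G.Adj x y)
    (hR : ∀ x ∈ R, ∀ y ∈ R, ¬ G.Adj x y)
    (a b : V) (ha : a ∈ R) (hb : b ∈ L) (hab : G.Adj a b) :
    (∀ x ∈ symmDiff L ({a, b} : Set V), ∀ y ∈ symmDiff L ({a, b} : Set V),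
        ¬ (pivot G a b).Adj x y) ∧
    (∀ x ∈ symmDiff R ({a, b} : Set V), ∀ y ∈ symmDiff R ({a, b} : Set V),
        ¬ (pivot G a b).Adj x y) := by
  have hLi : G.IsIndepSet L := SimpleGraph.isIndepSet_iff_forall_not_adj.2 hL
  have hRi : G.IsIndepSet R := SimpleGraph.isIndepSet_iff_forall_not_adj.2 hR
  have haL : a ∉ L := fun h => hL a h b hb hab
  have hbR : b ∉ R := fun h => hR a ha b h hab
  rw [Set.symmDiff_pair_eq_insert_sdiff haL hb, Set.pair_comm a b,
    Set.symmDiff_pair_eq_insert_sdiff hbR ha]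
  exact ⟨SimpleGraph.isIndepSet_iff_forall_not_adj.1 (hLi.pivot_insert_sdiff_snd hab hb),
    SimpleGraph.isIndepSet_iff_forall_not_adj.1 (hRi.pivot_insert_sdiff_fst hab ha)⟩

/-- Pivoting an edge of a bipartite graph with parts `L`, `R` yields a graph that is
bipartite with respect to the partition `L ∆ {a,b}`, `R ∆ {a,b}`. -/
theorem pivot_bipartite (G : SimpleGraph V) (L R : Set V)
    (hdisj : Disjoint L R) (hcover : L ∪ R = Set.univ)
    (hL : ∀ x ∈ L, ∀ y ∈ L, ¬ G.Adj x y)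
    (hR : ∀ x ∈ R, ∀ y ∈ R, ¬ G.Adj x y)
    (a b : V) (ha : a ∈ R) (hb : b ∈ L) (hab : G.Adj a b) :
    (∀ x ∈ symmDiff L ({a, b} : Set V), ∀ y ∈ symmDiff L ({a, b} : Set V),
        ¬ (pivot G a b).Adj x y) ∧
    (∀ x ∈ symmDiff R ({a, b} : Set V), ∀ y ∈ symmDiff R ({a, b} : Set V),
        ¬ (pivot G a b).Adj x y) :=
  pivot_bipartite_general G L R hL hR a b ha hb hab
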